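/- arXiv:1703.04946 — 3 statements merged into one kernel-verified Lean document; each statement's English description precedes it below -/
import Mathlib

section
/- For every natural number n, the limit as x → ∞ of iⁿerfc(−x)/xⁿ equals 2/n!. -/
open MeasureTheory Filter

/-- The `n`-th iterated integral of the complementary error function:
`ierfc 0 x = erfc x = (2/√π) ∫ₓ^∞ exp(-t²) dt` and
`ierfc (n+1) x = ∫ₓ^∞ ierfc n t dt`. -/
noncomputable def ierfc : ℕ → ℝ → ℝ
  | 0, x => (2 / Real.sqrt Real.pi) * ∫ t in Set.Ioi x, Real.exp (-t ^ 2)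
  | n + 1, x => ∫ t in Set.Ioi x, ierfc n t

/-!
Cauchy's formula for repeated integration (Fubini on the region `x < y < t`) gives the closed
form `ierfc n x = 2 / (√π n!) ∫ₓ^∞ (t - x)ⁿ exp(-t²) dt`. Hence
`ierfc n (-x) / xⁿ = 2 / (√π n!) ∫_{-x}^∞ (1 + t / x)ⁿ exp(-t²) dt`, and for `x ≥ 1` the integrand
is dominated by `(|t| + 1)ⁿ exp(-t²)`, so the integral tends to `∫ exp(-t²) = √π`.
-/

open Real Set Topology
open scoped Nat

lemma integrable_abs_add_pow_mul_exp_neg_sq {a : ℝ} (ha : 0 ≤ a) (m : ℕ) :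
    Integrable fun t : ℝ => (|t| + a) ^ m * exp (-t ^ 2) := by
  have hpow : Integrable fun t : ℝ => |t| ^ m * exp (-t ^ 2) := by
    have h := integrable_rpow_mul_exp_neg_mul_sq one_pos
      (neg_one_lt_zero.trans_le (Nat.cast_nonneg m))
    simp only [rpow_natCast, neg_one_mul] at h
    simpa [abs_mul, abs_pow] using h.abs
  refine ((hpow.add ((integrable_exp_neg_mul_sq one_pos).const_mul (a ^ m))).const_mul
    (2 ^ (m - 1))).mono' (by fun_prop) (ae_of_all _ fun t => ?_)
  rw [norm_of_nonneg (by positivity), Pi.add_apply, neg_one_mul]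
  calc (|t| + a) ^ m * exp (-t ^ 2) ≤ 2 ^ (m - 1) * (|t| ^ m + a ^ m) * exp (-t ^ 2) := by
        gcongr; exact add_pow_le (abs_nonneg t) ha m
    _ = _ := by ring

lemma integrable_sub_pow_mul_exp_neg_sq (x : ℝ) (m : ℕ) :
    Integrable fun t : ℝ => (t - x) ^ m * exp (-t ^ 2) :=
  (integrable_abs_add_pow_mul_exp_neg_sq (abs_nonneg x) m).mono' (by fun_prop)
    (ae_of_all _ fun t => by
      rw [norm_mul, norm_pow, norm_of_nonneg (exp_pos _).le, Real.norm_eq_abs]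
      gcongr
      exact abs_sub _ _)

noncomputable def repeatedIntegralKernel (g : ℝ → ℝ) (n : ℕ) : ℝ × ℝ → ℝ :=
  {p | p.1 < p.2}.indicator fun p => (p.2 - p.1) ^ n * g p.2

namespace repeatedIntegralKernel

variable (g : ℝ → ℝ) (n : ℕ)

lemma slice_fst (y : ℝ) :
    (fun t => repeatedIntegralKernel g n (y, t)) =
      (Ioi y).indicator fun t => (t - y) ^ n * g t := by
  ext t; simp [repeatedIntegralKernel, indicator_apply]

lemma slice_snd (t : ℝ) :
    (fun y => repeatedIntegralKernel g n (y, t)) =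
      (Iio t).indicator fun y => (t - y) ^ n * g t := by
  ext y; simp [repeatedIntegralKernel, indicator_apply]

lemma norm_apply (p : ℝ × ℝ) :
    ‖repeatedIntegralKernel g n p‖ = repeatedIntegralKernel (fun t => |g t|) n p := by
  unfold repeatedIntegralKernel
  rw [norm_indicator_eq_indicator_norm]
  simp only [indicator_apply, mem_ofPred_eq]
  split_ifs with hp
  · rw [norm_mul, norm_pow, Real.norm_eq_abs, Real.norm_eq_abs, abs_of_pos (sub_pos.2 hp)]
  · rfl

variable {g n} {x : ℝ}

lemma setIntegral_Ioi_fst {y : ℝ} (hy : x < y) :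
    ∫ t in Ioi x, repeatedIntegralKernel g n (y, t) = ∫ t in Ioi y, (t - y) ^ n * g t := by
  rw [slice_fst, setIntegral_indicator measurableSet_Ioi, Ioi_inter_Ioi, sup_of_le_right hy.le]

lemma setIntegral_Ioi_snd {t : ℝ} (ht : x < t) :
    ∫ y in Ioi x, repeatedIntegralKernel g n (y, t) = (t - x) ^ (n + 1) / (n + 1) * g t := by
  rw [slice_snd, setIntegral_indicator measurableSet_Iio, Ioi_inter_Iio,
    ← integral_Ioc_eq_integral_Ioo, ← intervalIntegral.integral_of_le ht.le,
    intervalIntegral.integral_mul_const,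
    intervalIntegral.integral_comp_sub_left (fun y => y ^ n) t, sub_self, integral_pow]
  simp

lemma integrable (hg : Measurable g)
    (hint : IntegrableOn (fun t => (t - x) ^ (n + 1) * g t) (Ioi x)) :
    Integrable (repeatedIntegralKernel g n)
      ((volume.restrict (Ioi x)).prod (volume.restrict (Ioi x))) := by
  have hmeas : Measurable (repeatedIntegralKernel g n) :=
    (by fun_prop : Measurable fun p : ℝ × ℝ => (p.2 - p.1) ^ n * g p.2).indicator
      (measurableSet_lt measurable_fst measurable_snd)
  refine (integrable_prod_iff' hmeas.aestronglyMeasurable).2 ⟨?_, ?_⟩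
  · refine ae_of_all _ fun t => ?_
    rw [slice_snd, integrable_indicator_iff measurableSet_Iio, IntegrableOn,
      Measure.restrict_restrict measurableSet_Iio, inter_comm, Ioi_inter_Iio]
    exact ((by fun_prop : Continuous fun y => (t - y) ^ n * g t).integrableOn_Icc).mono_set
      Ioo_subset_Icc_self
  · refine IntegrableOn.congr_fun (hint.norm.div_const ((n : ℝ) + 1)) (fun t (ht : x < t) => ?_)
      measurableSet_Ioi
    simp_rw [norm_apply]
    rw [setIntegral_Ioi_snd ht, norm_mul, norm_pow, Real.norm_eq_abs, Real.norm_eq_abs,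
      abs_of_pos (sub_pos.2 ht)]
    ring

end repeatedIntegralKernel

lemma setIntegral_Ioi_setIntegral_Ioi_sub_pow_mul {g : ℝ → ℝ} (hg : Measurable g) {x : ℝ} (n : ℕ)
    (hint : IntegrableOn (fun t => (t - x) ^ (n + 1) * g t) (Ioi x)) :
    ∫ y in Ioi x, ∫ t in Ioi y, (t - y) ^ n * g t
      = (∫ t in Ioi x, (t - x) ^ (n + 1) * g t) / (n + 1) := by
  calc ∫ y in Ioi x, ∫ t in Ioi y, (t - y) ^ n * g t
      = ∫ y in Ioi x, ∫ t in Ioi x, repeatedIntegralKernel g n (y, t) :=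
        setIntegral_congr_fun measurableSet_Ioi fun y hy =>
          (repeatedIntegralKernel.setIntegral_Ioi_fst hy).symm
    _ = ∫ t in Ioi x, ∫ y in Ioi x, repeatedIntegralKernel g n (y, t) :=
        integral_integral_swap (repeatedIntegralKernel.integrable hg hint)
    _ = ∫ t in Ioi x, (t - x) ^ (n + 1) * g t / (n + 1) :=
        setIntegral_congr_fun measurableSet_Ioi fun t ht => by
          rw [repeatedIntegralKernel.setIntegral_Ioi_snd ht]; ring
    _ = _ := integral_div _ _

lemma ierfc_eq_setIntegral_sub_pow_mul (n : ℕ) (x : ℝ) :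
    ierfc n x = 2 / √π / n ! * ∫ t in Ioi x, (t - x) ^ n * exp (-t ^ 2) := by
  induction n generalizing x with
  | zero => simp [ierfc]
  | succ n ih =>
    calc ierfc (n + 1) x = ∫ y in Ioi x, 2 / √π / n ! * ∫ t in Ioi y, (t - y) ^ n * exp (-t ^ 2) :=
          integral_congr_ae (ae_of_all _ fun y => ih y)
      _ = 2 / √π / n ! * ((∫ t in Ioi x, (t - x) ^ (n + 1) * exp (-t ^ 2)) / (n + 1)) := by
          rw [integral_const_mul, setIntegral_Ioi_setIntegral_Ioi_sub_pow_mul (by fun_prop) n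
            (integrable_sub_pow_mul_exp_neg_sq x (n + 1)).integrableOn]
      _ = _ := by
          rw [Nat.factorial_succ]
          push_cast
          field_simp

lemma tendsto_setIntegral_Ioi_neg_add_div_pow_mul {w : ℝ → ℝ} (n : ℕ)
    (hw : AEStronglyMeasurable w) (hdom : Integrable fun t => (|t| + 1) ^ n * w t) :
    Tendsto (fun x => ∫ t in Ioi (-x), ((t + x) / x) ^ n * w t) atTop (𝓝 (∫ t, w t)) := by
  simp_rw [← integral_indicator measurableSet_Ioi]
  refine tendsto_integral_filter_of_dominated_convergence (fun t => ‖(|t| + 1) ^ n * w t‖)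
    (Eventually.of_forall fun x => ((by fun_prop : Continuous fun t => ((t + x) / x) ^ n)
      |>.aestronglyMeasurable.mul hw).indicator measurableSet_Ioi) ?_ hdom.norm ?_
  · filter_upwards [eventually_ge_atTop 1] with x hx
    refine ae_of_all _ fun t => ?_
    rw [norm_indicator_eq_indicator_norm]
    by_cases ht : t ∈ Ioi (-x)
    · rw [indicator_of_mem ht]
      rw [mem_Ioi] at ht
      have hpos : 0 ≤ (t + x) / x := div_nonneg (by linarith) (by linarith)
      have hle : (t + x) / x ≤ |t| + 1 := by
        rw [add_div, div_self (by positivity : x ≠ 0)]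
        gcongr
        calc t / x ≤ |t| / x := by gcongr; exact le_abs_self t
          _ ≤ |t| := div_le_self (abs_nonneg t) hx
      rw [norm_mul, norm_mul, norm_pow, norm_pow, norm_of_nonneg hpos,
        norm_of_nonneg (by positivity : 0 ≤ |t| + 1)]
      gcongr
    · rw [indicator_of_notMem ht]; positivity
  · refine ae_of_all _ fun t => ?_
    have hlim : Tendsto (fun x => (t * x⁻¹ + 1) ^ n * w t) atTop (𝓝 (w t)) := by
      simpa using (((tendsto_inv_atTop_zero.const_mul t).add_const 1).pow n).mul_const (w t)
    refine hlim.congr' ?_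
    filter_upwards [eventually_gt_atTop (-t), eventually_ne_atTop 0] with x hx hx0
    rw [indicator_of_mem (mem_Ioi.2 (neg_lt.1 hx)), add_div, div_self hx0, div_eq_mul_inv]

/-- `lim_{x → ∞} ierfc n (-x) / x^n = 2 / n!`. -/
theorem ierfc_neg_div_pow_tendsto (n : ℕ) :
    Tendsto (fun x : ℝ => ierfc n (-x) / x ^ n) atTop
      (nhds (2 / (Nat.factorial n : ℝ))) := by
  have hgauss : ∫ t : ℝ, exp (-t ^ 2) = √π := by simpa using integral_gaussian 1
  have hlim := (tendsto_setIntegral_Ioi_neg_add_div_pow_mul n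
    (by fun_prop : Continuous fun t : ℝ => exp (-t ^ 2)).aestronglyMeasurable
    (integrable_abs_add_pow_mul_exp_neg_sq zero_le_one n)).const_mul (2 / √π / n !)
  have hconst : 2 / √π / n ! * √π = 2 / n ! := by
    field_simp [(sqrt_pos.2 pi_pos).ne']
  rw [hgauss, hconst] at hlim
  refine hlim.congr fun x => ?_
  rw [ierfc_eq_setIntegral_sub_pow_mul, mul_div_assoc, ← integral_div]
  congr 2 with t
  rw [sub_neg_eq_add, div_pow]
  ring
end

section
/- Fix constants a > 0, a real number b, and a natural n. For fixed r > b, the function t ↦ (2a√t)ⁿ · iⁿerfc((b − r)/(2a√t)) tends to (2/n!)·(r − b)ⁿ as t → 0⁺. -/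
open MeasureTheory Filter

open Set Real Topology
open scoped Nat

/-!
Fubini on the triangle `x < s < t` gives Cauchy's formula for repeated integration,
`ierfc n x = 2 / (√π n!) ∫_{t > x} (t - x)ⁿ exp(-t²) dt`. Hence, with `d = r - b > 0` and
`c = 2a√t`, `cⁿ ierfc n (-d/c) = 2 / (√π n!) ∫_{t > -d/c} (ct + d)ⁿ exp(-t²) dt`. As `c → 0⁺` the
integrand tends to `dⁿ exp(-t²)` and, for `c < 1`, is dominated by `n! e^d e^{|t| - t²}`, so the
integral tends to `dⁿ √π`.
-/

theorem measurableSet_triangle (x : ℝ) : MeasurableSet {q : ℝ × ℝ | x < q.1 ∧ q.1 < q.2} :=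
  (measurableSet_lt measurable_const measurable_fst).inter
    (measurableSet_lt measurable_fst measurable_snd)

theorem integral_Ioi_integral_Ioi_eq_integral_Ioi_integral_Ioo {E : Type*} [NormedAddCommGroup E]
    [NormedSpace ℝ E] {F : ℝ → ℝ → E} {x : ℝ}
    (hF : IntegrableOn (Function.uncurry F) {q : ℝ × ℝ | x < q.1 ∧ q.1 < q.2}) :
    ∫ s in Ioi x, ∫ t in Ioi s, F s t = ∫ t in Ioi x, ∫ s in Ioo x t, F s t := by
  set T := {q : ℝ × ℝ | x < q.1 ∧ q.1 < q.2}
  have hT : MeasurableSet T := measurableSet_triangle x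
  have hrow (s : ℝ) : ∫ t, T.indicator (Function.uncurry F) (s, t) =
      (Ioi x).indicator (fun s => ∫ t in Ioi s, F s t) s := by
    by_cases hs : x < s
    · rw [indicator_of_mem (mem_Ioi.2 hs), ← integral_indicator measurableSet_Ioi]
      congr 1 with t
      simp [T, indicator_apply, hs]
    · simp [T, hs]
  have hcol (t : ℝ) : ∫ s, T.indicator (Function.uncurry F) (s, t) =
      (Ioi x).indicator (fun t => ∫ s in Ioo x t, F s t) t := by
    by_cases ht : x < t
    · rw [indicator_of_mem (mem_Ioi.2 ht), ← integral_indicator measurableSet_Ioo]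
      rfl
    · rw [indicator_of_notMem (notMem_Ioi.2 (not_lt.1 ht))]
      have : ∀ s, ¬ (x < s ∧ s < t) := fun s h => ht (h.1.trans h.2)
      simp [T, this]
  calc ∫ s in Ioi x, ∫ t in Ioi s, F s t
      = ∫ s, ∫ t, T.indicator (Function.uncurry F) (s, t) := by
        simp only [hrow, integral_indicator measurableSet_Ioi]
    _ = ∫ t, ∫ s, T.indicator (Function.uncurry F) (s, t) :=
        integral_integral_swap ((integrable_indicator_iff hT).2 hF)
    _ = ∫ t in Ioi x, ∫ s in Ioo x t, F s t := by
        simp only [hcol, integral_indicator measurableSet_Ioi]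

theorem integral_Ioo_sub_pow (n : ℕ) {x t : ℝ} (h : x ≤ t) :
    ∫ s in Ioo x t, (t - s) ^ n = (t - x) ^ (n + 1) / (n + 1) := by
  rw [← integral_Ioc_eq_integral_Ioo, ← intervalIntegral.integral_of_le h,
    intervalIntegral.integral_comp_sub_left (fun u => u ^ n) t]
  simp [integral_pow]

theorem integrableOn_sub_pow_mul_triangle {g : ℝ → ℝ} (hg : Measurable g) {x : ℝ} (n : ℕ)
    (hg_int : IntegrableOn (fun t => (t - x) ^ (n + 1) * g t) (Ioi x)) :
    IntegrableOn (fun q : ℝ × ℝ => (q.2 - q.1) ^ n * g q.2) {q | x < q.1 ∧ q.1 < q.2} := by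
  set T := {q : ℝ × ℝ | x < q.1 ∧ q.1 < q.2}
  have hT : MeasurableSet T := measurableSet_triangle x
  have hslice (t : ℝ) : (fun s => T.indicator (fun q => (q.2 - q.1) ^ n * g q.2) (s, t)) =
      (Ioo x t).indicator (fun s => (t - s) ^ n * g t) := rfl
  have hnorm (t : ℝ) : ∫ s, ‖T.indicator (fun q => (q.2 - q.1) ^ n * g q.2) (s, t)‖ =
      (Ioi x).indicator (fun t => ‖(t - x) ^ (n + 1) * g t‖ / (n + 1)) t := by
    change ∫ s, ‖(Ioo x t).indicator (fun s => (t - s) ^ n * g t) s‖ = _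
    simp_rw [norm_indicator_eq_indicator_norm]
    rw [integral_indicator measurableSet_Ioo]
    by_cases ht : x < t
    · rw [indicator_of_mem (mem_Ioi.2 ht)]
      calc ∫ s in Ioo x t, ‖(t - s) ^ n * g t‖
          = ∫ s in Ioo x t, (t - s) ^ n * ‖g t‖ := by
            refine setIntegral_congr_fun measurableSet_Ioo fun s hs => ?_
            rw [norm_mul, norm_pow, Real.norm_of_nonneg (sub_nonneg.2 hs.2.le)]
        _ = ‖(t - x) ^ (n + 1) * g t‖ / (n + 1) := by
            rw [integral_mul_const, integral_Ioo_sub_pow n ht.le, norm_mul, norm_pow,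
              Real.norm_of_nonneg (sub_nonneg.2 ht.le)]
            ring
    · rw [indicator_of_notMem (notMem_Ioi.2 (not_lt.1 ht)), Ioo_eq_empty ht, Measure.restrict_empty,
        integral_zero_measure]
  rw [← integrable_indicator_iff hT, Measure.volume_eq_prod, integrable_prod_iff']
  · refine ⟨.of_forall fun t => ?_, ?_⟩
    · rw [hslice]
      exact (((continuous_const.sub continuous_id).pow n).mul continuous_const
        |>.integrableOn_Icc).mono_set Ioo_subset_Icc_self |>.integrable_indicator measurableSet_Ioo
    · simp only [hnorm]
      exact IntegrableOn.integrable_indicator (hg_int.norm.div_const _) measurableSet_Ioi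
  · exact (by fun_prop : Measurable fun q : ℝ × ℝ => (q.2 - q.1) ^ n * g q.2)
      |>.aestronglyMeasurable.indicator hT

theorem integral_Ioi_integral_Ioi_sub_pow_mul {g : ℝ → ℝ} (hg : Measurable g) (x : ℝ) (n : ℕ)
    (hg_int : IntegrableOn (fun t => (t - x) ^ (n + 1) * g t) (Ioi x)) :
    ∫ s in Ioi x, ∫ t in Ioi s, (t - s) ^ n * g t =
      (∫ t in Ioi x, (t - x) ^ (n + 1) * g t) / (n + 1) := by
  rw [integral_Ioi_integral_Ioi_eq_integral_Ioi_integral_Ioo (F := fun s t => (t - s) ^ n * g t)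
    (integrableOn_sub_pow_mul_triangle hg n hg_int), ← integral_div]
  refine setIntegral_congr_fun measurableSet_Ioi fun t ht => ?_
  rw [integral_mul_const, integral_Ioo_sub_pow n (le_of_lt ht)]
  ring

theorem integrable_exp_abs_sub_sq : Integrable fun t : ℝ => exp (|t| - t ^ 2) := by
  refine ((integrable_exp_neg_mul_sq (by norm_num : (0 : ℝ) < 1 / 2)).const_mul (exp (1 / 2))).mono'
    (by fun_prop) (.of_forall fun t => ?_)
  rw [norm_of_nonneg (exp_pos _).le, ← exp_add]
  gcongr
  nlinarith [sq_abs t, sq_nonneg (|t| - 1)]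

theorem pow_mul_exp_neg_sq_le (k : ℕ) {y t C : ℝ} (hy₀ : 0 ≤ y) (hy : y ≤ |t| + C) :
    y ^ k * exp (-t ^ 2) ≤ k ! * exp C * exp (|t| - t ^ 2) := by
  have hpow : y ^ k ≤ k ! * exp y := by
    have := pow_div_factorial_le_exp y hy₀ k
    rwa [div_le_iff₀' (by positivity)] at this
  calc y ^ k * exp (-t ^ 2) ≤ k ! * exp (|t| + C) * exp (-t ^ 2) := by
        gcongr; exact hpow.trans (by gcongr)
    _ = k ! * exp C * exp (|t| - t ^ 2) := by
      rw [mul_assoc, mul_assoc, ← exp_add, ← exp_add]; ring_nf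

theorem integrableOn_sub_pow_mul_exp_neg_sq (k : ℕ) (x : ℝ) :
    IntegrableOn (fun t => (t - x) ^ k * exp (-t ^ 2)) (Ioi x) := by
  refine (integrable_exp_abs_sub_sq.const_mul (k ! * exp (-x))).integrableOn.mono'
    (by fun_prop : Continuous fun t => (t - x) ^ k * exp (-t ^ 2)).aestronglyMeasurable ?_
  filter_upwards [ae_restrict_mem measurableSet_Ioi] with t ht
  have ht' : 0 ≤ t - x := sub_nonneg.2 (le_of_lt ht)
  rw [norm_of_nonneg (by positivity)]
  exact pow_mul_exp_neg_sq_le k ht' (by linarith [le_abs_self t])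

theorem ierfc_eq_integral (n : ℕ) (x : ℝ) :
    ierfc n x = 2 / (√π * n !) * ∫ t in Ioi x, (t - x) ^ n * exp (-t ^ 2) := by
  induction n generalizing x with
  | zero => simp [ierfc]
  | succ n ih =>
    calc ierfc (n + 1) x
        = 2 / (√π * n !) * ∫ s in Ioi x, ∫ t in Ioi s, (t - s) ^ n * exp (-t ^ 2) := by
          simp only [ierfc, ih, integral_const_mul]
      _ = 2 / (√π * (n + 1)!) * ∫ t in Ioi x, (t - x) ^ (n + 1) * exp (-t ^ 2) := by
          rw [integral_Ioi_integral_Ioi_sub_pow_mul (by fun_prop) x n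
            (integrableOn_sub_pow_mul_exp_neg_sq _ x), Nat.factorial_succ]
          push_cast
          field_simp

theorem mem_Ioi_neg_div_iff {c d t : ℝ} (hc : 0 < c) : t ∈ Ioi (-(d / c)) ↔ 0 < c * t + d := by
  rw [mem_Ioi, neg_lt_iff_pos_add, ← mul_pos_iff_of_pos_left hc, mul_add, mul_div_cancel₀ _ hc.ne']

theorem pow_mul_ierfc_neg_div {c : ℝ} (hc : 0 < c) (n : ℕ) (d : ℝ) :
    c ^ n * ierfc n (-(d / c)) =
      2 / (√π * n !) * ∫ t in Ioi (-(d / c)), (c * t + d) ^ n * exp (-t ^ 2) := by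
  rw [ierfc_eq_integral, mul_left_comm, ← integral_const_mul]
  congr 1
  refine setIntegral_congr_fun measurableSet_Ioi fun t _ => ?_
  rw [← mul_assoc, ← mul_pow]
  congr 2
  field_simp
  ring

theorem tendsto_integral_Ioi_mul_add_pow_mul_exp_neg_sq {d : ℝ} (hd : 0 < d) (n : ℕ) :
    Tendsto (fun c => ∫ t in Ioi (-(d / c)), (c * t + d) ^ n * exp (-t ^ 2)) (𝓝[>] 0)
      (𝓝 (d ^ n * √π)) := by
  have hgauss : ∫ t, d ^ n * exp (-t ^ 2) = d ^ n * √π := by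
    rw [integral_const_mul]
    congr 1
    simpa using integral_gaussian 1
  rw [← hgauss]
  simp_rw [← integral_indicator measurableSet_Ioi]
  refine tendsto_integral_filter_of_dominated_convergence (fun t => n ! * exp d * exp (|t| - t ^ 2))
    (.of_forall fun c => ?_) ?_ (integrable_exp_abs_sub_sq.const_mul _) (.of_forall fun t => ?_)
  · exact (by fun_prop : Continuous fun t => (c * t + d) ^ n * exp (-t ^ 2))
      |>.aestronglyMeasurable.indicator measurableSet_Ioi
  · filter_upwards [Ioo_mem_nhdsGT zero_lt_one] with c hc
    refine .of_forall fun t => ?_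
    by_cases ht : t ∈ Ioi (-(d / c))
    · have hpos := (mem_Ioi_neg_div_iff hc.1).1 ht
      rw [indicator_of_mem ht, norm_of_nonneg (by positivity)]
      refine pow_mul_exp_neg_sq_le n hpos.le ?_
      nlinarith [mul_nonneg hc.1.le (sub_nonneg.2 (le_abs_self t)),
        mul_nonneg (sub_nonneg.2 hc.2.le) (abs_nonneg t)]
    · rw [indicator_of_notMem ht, norm_zero]
      positivity
  · have hcont : Continuous fun c => (c * t + d) ^ n * exp (-t ^ 2) := by fun_prop
    have hlim := (hcont.tendsto 0).mono_left (nhdsWithin_le_nhds (s := Ioi 0))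
    simp only [zero_mul, zero_add] at hlim
    refine hlim.congr' ?_
    have hpos : ∀ᶠ c in 𝓝[>] (0 : ℝ), 0 < c * t + d := nhdsWithin_le_nhds <|
      continuousAt_const.eventually_lt (by fun_prop) (by simpa using hd)
    filter_upwards [self_mem_nhdsWithin, hpos] with c hc hct
    rw [indicator_of_mem ((mem_Ioi_neg_div_iff hc).2 hct)]

theorem tendsto_pow_mul_ierfc_neg_div {d : ℝ} (hd : 0 < d) (n : ℕ) :
    Tendsto (fun c => c ^ n * ierfc n (-(d / c))) (𝓝[>] 0) (𝓝 (2 / n ! * d ^ n)) := by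
  have hlim := (tendsto_integral_Ioi_mul_add_pow_mul_exp_neg_sq hd n).const_mul (2 / (√π * n !))
  rw [show 2 / (√π * n !) * (d ^ n * √π) = 2 / n ! * d ^ n by field_simp] at hlim
  refine hlim.congr' ?_
  filter_upwards [self_mem_nhdsWithin] with c hc
  rw [pow_mul_ierfc_neg_div hc]

/-- For `a > 0`, `r > b`, `(2a√t)^n * ierfc n ((b-r)/(2a√t)) → (2/n!)*(r-b)^n` as `t → 0⁺`. -/
theorem ierfc_scaled_neg_tendsto (a b r : ℝ) (ha : 0 < a) (n : ℕ) (hr : b < r) :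
    Tendsto (fun t : ℝ =>
        (2 * a * Real.sqrt t) ^ n * ierfc n ((b - r) / (2 * a * Real.sqrt t)))
      (nhdsWithin 0 (Set.Ioi 0))
      (nhds (2 / (Nat.factorial n : ℝ) * (r - b) ^ n)) := by
  have hscale : Tendsto (fun t => 2 * a * √t) (𝓝[>] 0) (𝓝[>] 0) := by
    refine tendsto_nhdsWithin_iff.2 ⟨?_, ?_⟩
    · have := ((by fun_prop : Continuous fun t : ℝ => 2 * a * √t).tendsto 0).mono_left
        (nhdsWithin_le_nhds (s := Ioi (0 : ℝ)))
      simpa using this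
    · filter_upwards [self_mem_nhdsWithin] with t ht
      exact mul_pos (by positivity) (sqrt_pos.2 ht)
  refine ((tendsto_pow_mul_ierfc_neg_div (sub_pos.2 hr) n).comp hscale).congr fun t => ?_
  simp only [Function.comp_apply, ← neg_sub r b, neg_div]
end

section
/- For every natural n, a > 0, and real x, the function u(x,t) = (2a√t)ⁿ · iⁿerfc(x/(2a√t)) defined for t > 0 satisfies the one-dimensional heat equation ∂u/∂t = a² · ∂²u/∂x². -/
/-!
Write `c = 2a√t` and `ξ = x / c`. A function `u = cⁿ F(ξ)` solves `u_t = a² u_xx` exactly when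
`F'' + 2ξF' = 2nF`. For `F = iⁿerfc`, since `(iⁿerfc)' = -iⁿ⁻¹erfc`, this ODE is the classical
recurrence `2n iⁿerfc x = iⁿ⁻²erfc x - 2x iⁿ⁻¹erfc x`. The difference of its two sides has zero
derivative (by induction on `n`, the derivative of one difference being minus the previous one)
and tends to `0` at `+∞`, because every `iⁿerfc` is dominated by a multiple of `e⁻ˣ`.
-/

open MeasureTheory Filter

open Set Real Topology

structure ExpTailBound (C : ℝ) (g : ℝ → ℝ) : Prop where
  continuous : Continuous g
  nonneg : ∀ x, 0 ≤ g x
  le_mul_exp_neg : ∀ x, g x ≤ C * exp (-x)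

namespace ExpTailBound

variable {C : ℝ} {g : ℝ → ℝ}

theorem integrableOn_Ioi (h : ExpTailBound C g) (b : ℝ) : IntegrableOn g (Ioi b) :=
  ((integrableOn_exp_neg_Ioi b).const_mul C).mono' h.continuous.aestronglyMeasurable.restrict
    (ae_of_all _ fun x => by
      simpa [abs_of_nonneg (h.nonneg x)] using h.le_mul_exp_neg x)

theorem hasDerivAt_integral_Ioi (h : ExpTailBound C g) (x : ℝ) :
    HasDerivAt (fun y => ∫ t in Ioi y, g t) (-g x) x := by
  have hsplit : (fun y => ∫ t in Ioi y, g t) = fun y => (∫ t in Ioi 0, g t) - ∫ t in 0..y, g t :=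
    funext fun y => eq_sub_of_add_eq'
      (intervalIntegral.integral_interval_add_Ioi (h.integrableOn_Ioi 0) (h.integrableOn_Ioi y))
  rw [hsplit, ← zero_sub]
  exact (hasDerivAt_const x _).sub <| intervalIntegral.integral_hasDerivAt_right
    (h.continuous.intervalIntegrable 0 x) (h.continuous.stronglyMeasurableAtFilter _ _)
    h.continuous.continuousAt

theorem integral_Ioi (h : ExpTailBound C g) : ExpTailBound C fun y => ∫ t in Ioi y, g t where
  continuous := continuous_iff_continuousAt.2 fun x => (h.hasDerivAt_integral_Ioi x).continuousAt
  nonneg x := setIntegral_nonneg measurableSet_Ioi fun t _ => h.nonneg t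
  le_mul_exp_neg x := calc
    ∫ t in Ioi x, g t ≤ ∫ t in Ioi x, C * exp (-t) :=
      setIntegral_mono_on (h.integrableOn_Ioi x) ((integrableOn_exp_neg_Ioi x).const_mul C)
        measurableSet_Ioi fun t _ => h.le_mul_exp_neg t
    _ = C * exp (-x) := by rw [integral_const_mul, integral_exp_neg_Ioi]

theorem tendsto_pow_mul_atTop_nhds_zero (h : ExpTailBound C g) (k : ℕ) :
    Tendsto (fun x => x ^ k * g x) atTop (𝓝 0) := by
  have hbound : Tendsto (fun x : ℝ => C * (x ^ k * exp (-x))) atTop (𝓝 0) := by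
    simpa using (tendsto_pow_mul_exp_neg_atTop_nhds_zero k).const_mul C
  refine squeeze_zero' ?_ ?_ hbound
  · filter_upwards [eventually_ge_atTop 0] with x hx using mul_nonneg (pow_nonneg hx k) (h.nonneg x)
  · filter_upwards [eventually_ge_atTop 0] with x hx
    rw [mul_left_comm]
    exact mul_le_mul_of_nonneg_left (h.le_mul_exp_neg x) (pow_nonneg hx k)

end ExpTailBound

theorem eq_of_hasDerivAt_zero_of_tendsto {h : ℝ → ℝ} {l : ℝ} (hd : ∀ x, HasDerivAt h 0 x)
    (hl : Tendsto h atTop (𝓝 l)) (x : ℝ) : h x = l :=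
  tendsto_nhds_unique (tendsto_const_nhds.congr fun y =>
    is_const_of_deriv_eq_zero (fun z => (hd z).differentiableAt) (fun z => (hd z).deriv) x y) hl

theorem hasDerivAt_pow_mul_comp_div_sqrt {F : ℝ → ℝ} {d : ℝ} (n : ℕ) {a : ℝ} (ha : a ≠ 0)
    (x : ℝ) {t : ℝ} (ht : 0 < t) (hF : HasDerivAt F d (x / (2 * a * √t))) :
    HasDerivAt (fun s => (2 * a * √s) ^ n * F (x / (2 * a * √s)))
      ((2 * a * √t) ^ n / (2 * t) * (n * F (x / (2 * a * √t)) - x / (2 * a * √t) * d)) t := by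
  have hsqrt : 0 < √t := sqrt_pos.2 ht
  have hc : HasDerivAt (fun s => 2 * a * √s) (2 * a * (1 / (2 * √t))) t :=
    (hasDerivAt_sqrt ht.ne').const_mul (2 * a)
  have hc0 : 2 * a * √t ≠ 0 := by positivity
  refine ((hc.pow n).mul (hF.comp t ((hasDerivAt_const t x).div hc hc0))).congr_deriv ?_
  simp only [Function.comp_apply, Pi.div_apply, Pi.pow_apply]
  generalize hs : √t = s at hsqrt hc0 ⊢
  obtain rfl : t = s ^ 2 := by rw [← hs, sq_sqrt ht.le]
  -- `HasDerivAt.pow` yields `c ^ (n - 1)`, with truncated subtraction at `n = 0`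
  rcases n with _ | n
  · field_simp
    ring
  · rw [pow_succ]
    field_simp
    push_cast
    ring

theorem deriv_deriv_const_mul_comp_div_const {F F' : ℝ → ℝ} {d : ℝ}
    (hF : ∀ ξ, HasDerivAt F (F' ξ) ξ) (k c x : ℝ) (hF' : HasDerivAt F' d (x / c)) :
    deriv (deriv fun y => k * F (y / c)) x = k * d / c ^ 2 := by
  have hdiv (y : ℝ) : HasDerivAt (fun y => y / c) (1 / c) y := by
    simpa using (hasDerivAt_id y).div_const c
  have hderiv : deriv (fun y => k * F (y / c)) = fun y => k * (F' (y / c) * (1 / c)) :=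
    funext fun y => (((hF (y / c)).comp y (hdiv y)).const_mul k).deriv
  have hderiv2 : HasDerivAt (fun y => k * (F' (y / c) * (1 / c))) (k * (d * (1 / c) * (1 / c))) x :=
    ((hF'.comp x (hdiv x)).mul_const (1 / c)).const_mul k
  rw [hderiv, hderiv2.deriv]
  ring

theorem heat_eq_of_similarity_ode {F F' F'' : ℝ → ℝ} (n : ℕ) (hF : ∀ ξ, HasDerivAt F (F' ξ) ξ)
    (hF' : ∀ ξ, HasDerivAt F' (F'' ξ) ξ) (hode : ∀ ξ, F'' ξ + 2 * ξ * F' ξ = 2 * n * F ξ)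
    {a : ℝ} (ha : a ≠ 0) (x : ℝ) {t : ℝ} (ht : 0 < t) :
    deriv (fun s => (2 * a * √s) ^ n * F (x / (2 * a * √s))) t
      = a ^ 2 * deriv (deriv fun y => (2 * a * √t) ^ n * F (y / (2 * a * √t))) x := by
  rw [(hasDerivAt_pow_mul_comp_div_sqrt n ha x ht (hF _)).deriv,
    deriv_deriv_const_mul_comp_div_const hF _ _ x (hF' _)]
  have hc2 : (2 * a * √t) ^ 2 = 4 * a ^ 2 * t := by rw [mul_pow, sq_sqrt ht.le]; ring
  rw [eq_sub_of_add_eq (hode _), hc2]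
  field_simp
  ring

/-- `ierfcShift n` is `iⁿ⁻¹erfc`, where `i⁻¹erfc x = (2/√π) exp (-x²)` is `-erfc'`; the shift makes
`(ierfcShift (n + 1))' = -ierfcShift n` hold for every `n`. -/
noncomputable def ierfcShift : ℕ → ℝ → ℝ
  | 0 => fun x => 2 / √π * exp (-x ^ 2)
  | n + 1 => ierfc n

theorem ierfcShift_succ_eq_integral (n : ℕ) :
    ierfcShift (n + 1) = fun x => ∫ t in Ioi x, ierfcShift n t := by
  cases n with
  | zero => funext x; exact (integral_const_mul _ _).symm
  | succ n => rfl

theorem expTailBound_ierfcShift_zero : ExpTailBound (2 / √π * exp (1 / 4)) (ierfcShift 0) where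
  continuous := by unfold ierfcShift; fun_prop
  nonneg x := by unfold ierfcShift; positivity
  le_mul_exp_neg x := by
    rw [mul_assoc, ← exp_add]
    dsimp only [ierfcShift]
    gcongr
    nlinarith [sq_nonneg (x - 1 / 2)]

theorem expTailBound_ierfcShift (n : ℕ) : ExpTailBound (2 / √π * exp (1 / 4)) (ierfcShift n) := by
  induction n with
  | zero => exact expTailBound_ierfcShift_zero
  | succ n ih => rw [ierfcShift_succ_eq_integral]; exact ih.integral_Ioi

theorem hasDerivAt_ierfcShift_zero (x : ℝ) :
    HasDerivAt (ierfcShift 0) (-(2 * x * ierfcShift 0 x)) x := by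
  have h : HasDerivAt (fun y => exp (-y ^ 2)) (exp (-x ^ 2) * -(2 * x ^ 1)) x :=
    (hasDerivAt_pow 2 x).neg.exp
  refine (h.const_mul (2 / √π)).congr_deriv ?_
  simp only [ierfcShift]
  ring

theorem hasDerivAt_ierfc (n : ℕ) (x : ℝ) : HasDerivAt (ierfc n) (-ierfcShift n x) x := by
  have := (expTailBound_ierfcShift n).hasDerivAt_integral_Ioi x
  rwa [← ierfcShift_succ_eq_integral] at this

theorem hasDerivAt_ierfcShift_sub_recurrence (n : ℕ) {d z : ℝ}
    (hd : HasDerivAt (ierfcShift n) d z) :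
    HasDerivAt (fun y => ierfcShift n y - (2 * (n + 1) * ierfc (n + 1) y + 2 * y * ierfc n y))
      (d + 2 * n * ierfc n z + 2 * z * ierfcShift n z) z := by
  have h := hd.sub (((hasDerivAt_ierfc (n + 1) z).const_mul (2 * (n + 1 : ℝ))).add
    (((hasDerivAt_id z).const_mul 2).mul (hasDerivAt_ierfc n z)))
  refine h.congr_deriv ?_
  simp only [ierfcShift, id]
  ring

theorem tendsto_ierfcShift_sub_recurrence (n : ℕ) :
    Tendsto (fun y => ierfcShift n y - (2 * (n + 1) * ierfc (n + 1) y + 2 * y * ierfc n y))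
      atTop (𝓝 0) := by
  have hlim (k m : ℕ) := (expTailBound_ierfcShift m).tendsto_pow_mul_atTop_nhds_zero k
  have := (hlim 0 n).sub (((hlim 0 (n + 2)).const_mul (2 * (n + 1 : ℝ))).add
    ((hlim 1 (n + 1)).const_mul 2))
  simpa [ierfcShift, mul_assoc] using this

theorem ierfcShift_recurrence (n : ℕ) (x : ℝ) :
    ierfcShift n x = 2 * (n + 1) * ierfc (n + 1) x + 2 * x * ierfc n x := by
  induction n generalizing x <;> refine sub_eq_zero.1 <|
    eq_of_hasDerivAt_zero_of_tendsto (fun z => ?_) (tendsto_ierfcShift_sub_recurrence _) x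
  case zero =>
    refine (hasDerivAt_ierfcShift_sub_recurrence 0 (hasDerivAt_ierfcShift_zero z)).congr_deriv ?_
    simp
  case succ n ih =>
    refine (hasDerivAt_ierfcShift_sub_recurrence (n + 1) (hasDerivAt_ierfc n z)).congr_deriv ?_
    rw [ih z]
    simp only [ierfcShift]
    push_cast
    ring

theorem hasDerivAt_ierfcShift (n : ℕ) (x : ℝ) :
    HasDerivAt (ierfcShift n) (-(2 * n * ierfc n x + 2 * x * ierfcShift n x)) x := by
  cases n with
  | zero => simpa using hasDerivAt_ierfcShift_zero x
  | succ n =>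
    refine (hasDerivAt_ierfc n x).congr_deriv ?_
    rw [ierfcShift_recurrence n x]
    push_cast
    rfl

/-- `u(x,t) = (2a√t)^n * ierfc n (x/(2a√t))` satisfies the heat equation
`∂u/∂t = a² ∂²u/∂x²` for `t > 0`. -/
theorem ierfc_heat_solution (n : ℕ) (a : ℝ) (ha : 0 < a) (x t : ℝ) (ht : 0 < t) :
    deriv (fun s : ℝ =>
        (2 * a * Real.sqrt s) ^ n * ierfc n (x / (2 * a * Real.sqrt s))) t
      = a ^ 2 *
        deriv (deriv (fun y : ℝ =>
          (2 * a * Real.sqrt t) ^ n * ierfc n (y / (2 * a * Real.sqrt t)))) x :=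
  heat_eq_of_similarity_ode n (hasDerivAt_ierfc n) (fun ξ => (hasDerivAt_ierfcShift n ξ).neg)
    (fun ξ => by ring) ha.ne' x ht
end
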